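/- Let A be a commutative R-algebra over a commutative ring R containing Q. The Eulerian idempotents e_n^{(i)} ∈ Q[S_n] (for 1 ≤ i ≤ n) acting on the degree-n part of the Hochschild complex are orthogonal idempotents summing to the identity: e_n^{(i)} e_n^{(j)} = δ_{ij} e_n^{(i)} and Σ_i e_n^{(i)} = 1. -/

import Mathlib

open Finset

/-- The number of descents of a permutation `σ ∈ S_n`. -/
def des {n : ℕ} (σ : Equiv.Perm (Fin n)) : ℕ :=
  (Finset.univ.filter
    (fun p : Fin n × Fin n => (p.2 : ℕ) = (p.1 : ℕ) + 1 ∧ σ p.2 < σ p.1)).card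


/-- The coefficient of the permutation `σ` (with `d = des σ`) in the `i`-th Eulerian
idempotent, i.e. the coefficient of `x^i` in `binom(x - d + n - 1, n)`. -/
noncomputable def eulerCoeff (n d i : ℕ) : ℚ :=
  ((((Nat.factorial n : ℚ))⁻¹ • ∏ j ∈ Finset.range n,
    (Polynomial.X + Polynomial.C ((n : ℚ) - 1 - (d : ℚ) - (j : ℚ)))) : Polynomial ℚ).coeff i

/-- The `i`-th Eulerian idempotent `e_n^{(i)} ∈ ℚ[S_n]`, defined by the generating function
`Σ_i e_n^{(i)} x^i = Σ_{σ ∈ S_n} binom(x - des(σ) + n - 1, n) σ`. -/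
noncomputable def euler (n : ℕ) (i : ℕ) : MonoidAlgebra ℚ (Equiv.Perm (Fin n)) :=
  ∑ σ : Equiv.Perm (Fin n), MonoidAlgebra.single σ (eulerCoeff n (des σ) i)

namespace EulerianAux

variable {n : ℕ}

/-- The set of descent pairs. -/
def Dset (σ : Equiv.Perm (Fin n)) : Finset (Fin n × Fin n) :=
  Finset.univ.filter
    (fun p : Fin n × Fin n => (p.2 : ℕ) = (p.1 : ℕ) + 1 ∧ σ p.2 < σ p.1)

lemma des_eq_card (σ : Equiv.Perm (Fin n)) : des σ = (Dset σ).card := rfl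

/-- number of descent pairs `(k, k+1)` with `k+1 ≤ m`. -/
def dB (σ : Equiv.Perm (Fin n)) (m : ℕ) : ℕ :=
  ((Dset σ).filter (fun p => (p.2 : ℕ) ≤ m)).card

lemma dB_eq_des (σ : Equiv.Perm (Fin n)) {m : ℕ} (h : n - 1 ≤ m) : dB σ m = des σ := by
  rw [des_eq_card, dB]
  congr 1
  apply Finset.filter_true_of_mem
  intro p hp
  have := p.2.isLt
  omega

lemma dB_le (σ : Equiv.Perm (Fin n)) (m : ℕ) : dB σ m ≤ m := by
  classical
  have : dB σ m ≤ (Finset.Icc 1 m).card := by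
    apply Finset.card_le_card_of_injOn (fun p => (p.2 : ℕ))
    · intro p hp
      simp only [Finset.mem_coe, Dset, Finset.mem_filter] at hp
      simp only [Finset.mem_coe, Finset.mem_Icc]
      omega
    · intro p hp q hq hpq
      simp only [Finset.mem_coe, Dset, Finset.mem_filter] at hp hq
      have h1 : (p.2 : ℕ) = (q.2 : ℕ) := by simpa using hpq
      have h2 : (p.1 : ℕ) = (q.1 : ℕ) := by omega
      exact Prod.ext (Fin.ext h2) (Fin.ext h1)
  simpa using this

lemma des_le_dB_add (σ : Equiv.Perm (Fin n)) (m : ℕ) : des σ ≤ dB σ m + (n - 1 - m) := by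
  classical
  have hsplit := Finset.card_filter_add_card_filter_not
    (s := Dset σ) (p := fun p => (p.2 : ℕ) ≤ m)
  have hneg : ((Dset σ).filter (fun p => ¬ (p.2 : ℕ) ≤ m)).card ≤ (Finset.Icc (m+1) (n-1)).card := by
    apply Finset.card_le_card_of_injOn (fun p => (p.2 : ℕ))
    · intro p hp
      simp only [Finset.mem_coe, Dset, Finset.mem_filter] at hp
      have := p.2.isLt
      simp only [Finset.mem_coe, Finset.mem_Icc]
      omega
    · intro p hp q hq hpq
      simp only [Finset.mem_coe, Dset, Finset.mem_filter] at hp hq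
      have h1 : (p.2 : ℕ) = (q.2 : ℕ) := by simpa using hpq
      have h2 : (p.1 : ℕ) = (q.1 : ℕ) := by omega
      exact Prod.ext (Fin.ext h2) (Fin.ext h1)
  rw [des_eq_card]
  have hdb : dB σ m = ((Dset σ).filter (fun p => (p.2 : ℕ) ≤ m)).card := rfl
  have hIcc := Nat.card_Icc (m+1) (n-1)
  omega

lemma dB_zero (σ : Equiv.Perm (Fin n)) : dB σ 0 = 0 := by
  rw [dB, Finset.card_eq_zero]
  ext p
  simp only [Dset, Finset.mem_filter, Finset.mem_univ, true_and, Finset.notMem_empty, iff_false]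
  rintro ⟨⟨h1, h2⟩, h3⟩
  omega

lemma des_le (σ : Equiv.Perm (Fin n)) : des σ ≤ n - 1 := by
  have := des_le_dB_add σ 0
  rw [dB_zero] at this
  omega

lemma dB_step (σ : Equiv.Perm (Fin n)) (k : ℕ) (hk : k + 1 < n) :
    dB σ (k+1) = dB σ k + (if σ ⟨k+1, hk⟩ < σ ⟨k, by omega⟩ then 1 else 0) := by
  classical
  rw [dB, dB]
  have hsub : (Dset σ).filter (fun p => (p.2 : ℕ) ≤ k+1) =
      ((Dset σ).filter (fun p => (p.2 : ℕ) ≤ k)) ∪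
      ((Dset σ).filter (fun p => (p.2 : ℕ) = k+1)) := by
    ext p
    simp only [Finset.mem_union, Finset.mem_filter]
    constructor
    · rintro ⟨h1, h2⟩
      rcases Nat.lt_or_ge (p.2 : ℕ) (k+1) with h | h
      · exact Or.inl ⟨h1, by omega⟩
      · exact Or.inr ⟨h1, by omega⟩
    · rintro (⟨h1, h2⟩ | ⟨h1, h2⟩) <;> exact ⟨h1, by omega⟩
  rw [hsub, Finset.card_union_of_disjoint]
  · congr 1
    by_cases hdesc : σ ⟨k+1, hk⟩ < σ ⟨k, by omega⟩
    · rw [if_pos hdesc]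
      rw [Finset.card_eq_one]
      refine ⟨(⟨k, by omega⟩, ⟨k+1, hk⟩), ?_⟩
      ext p
      simp only [Finset.mem_filter, Dset, Finset.mem_univ, true_and, Finset.mem_singleton]
      obtain ⟨p1, p2⟩ := p
      constructor
      · rintro ⟨⟨h1, h2⟩, h3⟩
        simp only at h1 h2 h3
        have hp2 : p2 = (⟨k+1, hk⟩ : Fin n) := Fin.ext (by simp only [Fin.val_mk]; omega)
        have hp1 : p1 = (⟨k, Nat.lt_of_succ_lt hk⟩ : Fin n) := Fin.ext (by simp only [Fin.val_mk]; omega)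
        exact Prod.ext hp1 hp2
      · rintro h
        cases h
        exact ⟨⟨rfl, hdesc⟩, rfl⟩
    · rw [if_neg hdesc, Finset.card_eq_zero]
      ext p
      simp only [Finset.mem_filter, Dset, Finset.mem_univ, true_and, Finset.notMem_empty,
        iff_false]
      obtain ⟨p1, p2⟩ := p
      rintro ⟨⟨h1, h2⟩, h3⟩
      simp only at h1 h2 h3
      have hp2 : p2 = (⟨k+1, hk⟩ : Fin n) := Fin.ext (by simp only [Fin.val_mk]; omega)
      have hp1 : p1 = (⟨k, Nat.lt_of_succ_lt hk⟩ : Fin n) := Fin.ext (by simp only [Fin.val_mk]; omega)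
      subst hp1
      subst hp2
      exact hdesc h2
  · rw [Finset.disjoint_filter]
    intro p _ h1
    omega

lemma sort_eq_iff {p : ℕ} (f : Fin n → Fin p) (σ : Equiv.Perm (Fin n)) :
    Tuple.sort f = σ ↔ ∀ i j : Fin n, i < j →
      (f (σ i) < f (σ j) ∨ (f (σ i) = f (σ j) ∧ σ i < σ j)) := by
  rw [eq_comm, Tuple.eq_sort_iff]
  constructor
  · rintro ⟨hmono, hties⟩ i j hij
    rcases lt_or_eq_of_le (hmono hij.le) with h | h
    · exact Or.inl h
    · exact Or.inr ⟨h, hties i j hij h⟩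
  · intro H
    constructor
    · intro i j hij
      rcases eq_or_lt_of_le hij with rfl | h
      · exact le_refl _
      · rcases H i j h with h' | ⟨h', _⟩
        · exact le_of_lt h'
        · exact le_of_eq h'
    · intro i j hij heq
      rcases H i j hij with h' | ⟨_, h'⟩
      · exact absurd heq h'.ne
      · exact h'

lemma base_lt {N a b s t : ℕ} (hs : s < N) (ht : t < N) :
    a * N + s < b * N + t ↔ (a < b ∨ (a = b ∧ s < t)) := by
  constructor
  · intro h
    rcases lt_trichotomy a b with h' | h' | h'
    · exact Or.inl h'
    · subst h'
      exact Or.inr ⟨rfl, by omega⟩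
    · exfalso
      have he : (b + 1) * N = b * N + N := by ring
      have : b * N + N ≤ a * N := by
        have : (b + 1) * N ≤ a * N := Nat.mul_le_mul_right N h'
        omega
      omega
  · rintro (h | ⟨rfl, h⟩)
    · have he : (a + 1) * N = a * N + N := by ring
      have : a * N + N ≤ b * N := by
        have : (a + 1) * N ≤ b * N := Nat.mul_le_mul_right N h
        omega
      omega
    · omega

lemma strictMono_iff_adj (g : Fin n → ℕ) :
    StrictMono g ↔ ∀ (k : ℕ) (hk : k + 1 < n),
      g ⟨k, Nat.lt_of_succ_lt hk⟩ < g ⟨k+1, hk⟩ := by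
  constructor
  · intro hg k hk
    exact hg (by simp [Fin.lt_def])
  · intro H
    have key : ∀ (d i : ℕ) (h : i + d + 1 < n), g ⟨i, by omega⟩ < g ⟨i + d + 1, h⟩ := by
      intro d
      induction d with
      | zero => intro i h; exact H i h
      | succ d ih =>
        intro i h
        have h1 : i + d + 1 < n := by omega
        have hstep := H (i + d + 1) (by omega)
        have := ih i h1
        have heq : (⟨i + d + 1 + 1, by omega⟩ : Fin n) = ⟨i + (d+1) + 1, h⟩ := by
          apply Fin.ext; simp only [Fin.val_mk]; omega
        calc g ⟨i, by omega⟩ < g ⟨i + d + 1, h1⟩ := this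
          _ < g ⟨i + d + 1 + 1, by omega⟩ := hstep
          _ = g ⟨i + (d+1) + 1, h⟩ := by rw [heq]
    intro i j hij
    have hij' : (i : ℕ) < (j : ℕ) := hij
    have hj : (j : ℕ) = (i : ℕ) + ((j : ℕ) - (i : ℕ) - 1) + 1 := by omega
    have := key ((j : ℕ) - (i : ℕ) - 1) (i : ℕ) (by omega)
    have e1 : (⟨(i : ℕ), by omega⟩ : Fin n) = i := Fin.ext rfl
    have e2 : (⟨(i : ℕ) + ((j : ℕ) - (i : ℕ) - 1) + 1, by omega⟩ : Fin n) = j :=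
      Fin.ext (by simp only [Fin.val_mk]; omega)
    rwa [e1, e2] at this

lemma strictMono_gap {g : Fin n → ℕ} (hg : StrictMono g) (i j : Fin n) (hij : i ≤ j) :
    g i + ((j : ℕ) - (i : ℕ)) ≤ g j := by
  have key : ∀ (d : ℕ) (i j : Fin n), (j : ℕ) = (i : ℕ) + d → g i + d ≤ g j := by
    intro d
    induction d with
    | zero =>
      intro i j h
      have : i = j := Fin.ext (by omega)
      subst this; omega
    | succ d ih =>
      intro i j h
      have hmid : (i : ℕ) + d < n := by have := j.isLt; omega
      have h1 := ih i ⟨(i : ℕ) + d, hmid⟩ (by simp)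
      have h2 : g ⟨(i : ℕ) + d, hmid⟩ < g j := hg (by simp [Fin.lt_def]; omega)
      omega
  have := key ((j : ℕ) - (i : ℕ)) i j (by have : (i:ℕ) ≤ (j:ℕ) := hij; omega)
  exact this

/-- `toZ σ f i = f (σ i) + (i - dB σ i)`. -/
def toZ (σ : Equiv.Perm (Fin n)) {p : ℕ} (f : Fin n → Fin p) (i : Fin n) : ℕ :=
  (f (σ i) : ℕ) + ((i : ℕ) - dB σ (i : ℕ))

lemma sort_iff_strictMono_toZ {p : ℕ} (f : Fin n → Fin p) (σ : Equiv.Perm (Fin n)) :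
    Tuple.sort f = σ ↔ StrictMono (toZ σ f) := by
  have hL : Tuple.sort f = σ ↔ StrictMono (fun i => (f (σ i) : ℕ) * n + (σ i : ℕ)) := by
    rw [sort_eq_iff]
    constructor
    · intro H i j hij
      rcases H i j hij with h | ⟨h, h'⟩
      · exact (base_lt (σ i).isLt (σ j).isLt).2 (Or.inl h)
      · exact (base_lt (σ i).isLt (σ j).isLt).2 (Or.inr ⟨by rw [h], h'⟩)
    · intro H i j hij
      rcases (base_lt (σ i).isLt (σ j).isLt).1 (H hij) with h | ⟨h, h'⟩
      · exact Or.inl h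
      · exact Or.inr ⟨Fin.ext h, h'⟩
  rw [hL, strictMono_iff_adj, strictMono_iff_adj]
  apply forall_congr'
  intro k
  apply forall_congr'
  intro hk
  have hstep := dB_step σ k hk
  have hle := dB_le σ k
  simp only [toZ, Fin.val_mk]
  by_cases hdesc : σ ⟨k+1, hk⟩ < σ ⟨k, Nat.lt_of_succ_lt hk⟩
  · rw [if_pos hdesc] at hstep
    have hd : (σ ⟨k+1, hk⟩ : ℕ) < (σ ⟨k, Nat.lt_of_succ_lt hk⟩ : ℕ) := hdesc
    rw [base_lt (σ ⟨k, Nat.lt_of_succ_lt hk⟩).isLt (σ ⟨k+1, hk⟩).isLt]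
    constructor
    · rintro (h | ⟨h, h'⟩)
      · omega
      · omega
    · intro h
      left
      omega
  · rw [if_neg hdesc] at hstep
    have hd : (σ ⟨k, Nat.lt_of_succ_lt hk⟩ : ℕ) < (σ ⟨k+1, hk⟩ : ℕ) := by
      have hne : σ ⟨k, Nat.lt_of_succ_lt hk⟩ ≠ σ ⟨k+1, hk⟩ := by
        intro h
        have := σ.injective h
        have : k = k + 1 := congrArg Fin.val this
        omega
      have := Fin.lt_or_lt_of_ne hne
      rcases this with h | h
      · exact h
      · exact absurd h hdesc
    rw [base_lt (σ ⟨k, Nat.lt_of_succ_lt hk⟩).isLt (σ ⟨k+1, hk⟩).isLt]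
    constructor
    · rintro (h | ⟨h, h'⟩) <;> omega
    · intro h
      rcases Nat.lt_or_ge (f (σ ⟨k, Nat.lt_of_succ_lt hk⟩) : ℕ) (f (σ ⟨k+1, hk⟩) : ℕ) with h' | h'
      · exact Or.inl h'
      · right
        constructor
        · omega
        · exact hd

lemma dB_le_des (σ : Equiv.Perm (Fin n)) (m : ℕ) : dB σ m ≤ des σ := by
  rw [des_eq_card, dB]
  exact Finset.card_filter_le _ _

lemma card_strictMono (m : ℕ) :
    (Finset.univ.filter (fun z : Fin n → Fin m => StrictMono z)).card = m.choose n := by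
  classical
  have hpc : (Finset.powersetCard n (Finset.univ : Finset (Fin m))).card = m.choose n := by
    rw [Finset.card_powersetCard, Finset.card_univ, Fintype.card_fin]
  rw [← hpc]
  apply Finset.card_bij (fun z _ => Finset.image z Finset.univ)
  · intro z hz
    simp only [Finset.mem_filter] at hz
    rw [Finset.mem_powersetCard]
    refine ⟨Finset.subset_univ _, ?_⟩
    rw [Finset.card_image_of_injective _ hz.2.injective, Finset.card_univ, Fintype.card_fin]
  · intro z hz z' hz' him
    simp only [Finset.mem_filter] at hz hz'
    have hcard : (Finset.image z Finset.univ).card = n := by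
      rw [Finset.card_image_of_injective _ hz.2.injective, Finset.card_univ, Fintype.card_fin]
    have h1 : z = ⇑((Finset.image z Finset.univ).orderEmbOfFin hcard) :=
      Finset.orderEmbOfFin_unique hcard (fun x => Finset.mem_image_of_mem _ (Finset.mem_univ x))
        hz.2
    have h2 : z' = ⇑((Finset.image z Finset.univ).orderEmbOfFin hcard) :=
      Finset.orderEmbOfFin_unique hcard
        (fun x => him ▸ Finset.mem_image_of_mem _ (Finset.mem_univ x)) hz'.2
    rw [h1, h2]
  · intro s hs
    rw [Finset.mem_powersetCard] at hs
    refine ⟨⇑(s.orderEmbOfFin hs.2), ?_, ?_⟩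
    · simp only [Finset.mem_filter]
      exact ⟨Finset.mem_univ _, (s.orderEmbOfFin hs.2).strictMono⟩
    · apply Finset.coe_injective
      rw [Finset.coe_image, Finset.coe_univ, Set.image_univ, Finset.range_orderEmbOfFin]

lemma card_fiber {p : ℕ} (hn : 1 ≤ n) (hp : 1 ≤ p) (σ : Equiv.Perm (Fin n)) :
    (Finset.univ.filter (fun f : Fin n → Fin p => Tuple.sort f = σ)).card
      = Nat.choose (p + n - 1 - des σ) n := by
  classical
  set m := p + n - 1 - des σ with hm
  have hdes : des σ ≤ n - 1 := des_le σ
  rw [← card_strictMono (n := n) m]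
  -- the bound on toZ values
  have hbound : ∀ (f : Fin n → Fin p), Tuple.sort f = σ → ∀ i, toZ σ f i < m := by
    intro f hf i
    have hsm : StrictMono (toZ σ f) := (sort_iff_strictMono_toZ f σ).1 hf
    have hlast : toZ σ f i ≤ toZ σ f ⟨n-1, by omega⟩ := by
      rcases le_or_gt i ⟨n-1, by omega⟩ with h | h
      · exact (hsm.le_iff_le).2 h
      · exfalso
        have := i.isLt
        have : (i : ℕ) ≤ n - 1 := by omega
        have h' : (⟨n-1, by omega⟩ : Fin n) < i := h
        have : n - 1 < (i : ℕ) := h'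
        omega
    have hZlast : toZ σ f ⟨n-1, by omega⟩ ≤ (p - 1) + ((n-1) - des σ) := by
      simp only [toZ, Fin.val_mk]
      have h1 : (f (σ ⟨n-1, by omega⟩) : ℕ) ≤ p - 1 := by
        have := (f (σ ⟨n-1, by omega⟩)).isLt
        omega
      rw [dB_eq_des σ (le_refl (n-1))]
      omega
    omega
  apply Finset.card_bij (fun f hf => fun i =>
    (⟨toZ σ f i, hbound f (by simpa using hf) i⟩ : Fin m))
  · intro f hf
    simp only [Finset.mem_filter] at hf ⊢
    refine ⟨Finset.mem_univ _, ?_⟩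
    intro i j hij
    have hsm : StrictMono (toZ σ f) := (sort_iff_strictMono_toZ f σ).1 hf.2
    exact hsm hij
  · intro f hf f' hf' heq
    simp only [Finset.mem_filter] at hf hf'
    funext x
    have := congrFun heq (σ.symm x)
    have hval : toZ σ f (σ.symm x) = toZ σ f' (σ.symm x) := congrArg Fin.val this
    simp only [toZ, Equiv.Perm.coe_inv, Equiv.apply_symm_apply] at hval
    exact Fin.ext (by omega)
  · intro w hw
    simp only [Finset.mem_filter] at hw
    have hwsm : StrictMono w := hw.2
    have hwsm' : StrictMono (fun i => (w i : ℕ)) := fun i j hij => hwsm hij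
    -- bounds needed to define f
    have hge : ∀ i : Fin n, (i : ℕ) - dB σ (i : ℕ) ≤ (w i : ℕ) := by
      intro i
      have := strictMono_gap hwsm' ⟨0, by omega⟩ i (by simp [Fin.le_def])
      simp only [Fin.val_mk] at this
      have h2 := dB_le σ (i : ℕ)
      omega
    have hlt : ∀ i : Fin n, (w i : ℕ) - ((i : ℕ) - dB σ (i : ℕ)) < p := by
      intro i
      have hgap := strictMono_gap hwsm' i ⟨n-1, by omega⟩ (by
        simp only [Fin.le_def, Fin.val_mk]
        have := i.isLt; omega)
      simp only [Fin.val_mk] at hgap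
      have hwlast : (w ⟨n-1, by omega⟩ : ℕ) < m := (w ⟨n-1, by omega⟩).isLt
      have h3 := des_le_dB_add σ (i : ℕ)
      have h4 := dB_le σ (i : ℕ)
      have h5 := i.isLt
      have h6 := dB_le_des σ (i : ℕ)
      omega
    refine ⟨fun x => ⟨(w (σ.symm x) : ℕ) - (((σ.symm x) : ℕ) - dB σ ((σ.symm x) : ℕ)),
      hlt (σ.symm x)⟩, ?_, ?_⟩
    · simp only [Finset.mem_filter]
      refine ⟨Finset.mem_univ _, ?_⟩
      rw [sort_iff_strictMono_toZ]
      have : toZ σ (fun x => (⟨(w (σ.symm x) : ℕ) - (((σ.symm x) : ℕ) - dB σ ((σ.symm x) : ℕ)),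
          hlt (σ.symm x)⟩ : Fin p)) = fun i => (w i : ℕ) := by
        funext i
        simp only [toZ, Equiv.symm_apply_apply, Fin.val_mk]
        have := hge i
        omega
      rw [this]
      exact hwsm'
    · funext i
      apply Fin.ext
      simp only [toZ, Fin.val_mk, Equiv.symm_apply_apply]
      have := hge i
      omega
noncomputable def Phi (n t : ℕ) : MonoidAlgebra ℚ (Equiv.Perm (Fin n)) :=
  ∑ f : Fin n → Fin t, MonoidAlgebra.single (Tuple.sort f) 1

lemma comb_lt {p q a b : ℕ} (ha : a < p) (hb : b < q) : a * q + b < q * p := by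
  have h1 : (a + 1) * q ≤ p * q := Nat.mul_le_mul_right q ha
  have h2 : (a + 1) * q = a * q + q := by ring
  have h3 : p * q = q * p := Nat.mul_comm p q
  omega

lemma digit_eq {q a b s t : ℕ} (hs : s < q) (ht : t < q) (h : a * q + s = b * q + t) :
    a = b ∧ s = t := by
  rcases lt_trichotomy a b with h' | h' | h'
  · exact absurd h ((base_lt hs ht).2 (Or.inl h')).ne
  · subst h'; omega
  · exact absurd h.symm ((base_lt ht hs).2 (Or.inl h')).ne

lemma sort_comb {p q : ℕ} (g : Fin n → Fin q) (f : Fin n → Fin p) :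
    Tuple.sort (fun x => (⟨(f ((Tuple.sort g)⁻¹ x) : ℕ) * q + (g x : ℕ),
        comb_lt (f ((Tuple.sort g)⁻¹ x)).isLt (g x).isLt⟩ : Fin (q * p)))
      = Tuple.sort g * Tuple.sort f := by
  set β := Tuple.sort g with hβ
  set α := Tuple.sort f with hα
  set h : Fin n → Fin (q * p) := fun x => (⟨(f (β⁻¹ x) : ℕ) * q + (g x : ℕ),
    comb_lt (f (β⁻¹ x)).isLt (g x).isLt⟩ : Fin (q * p)) with hh
  have Hf : ∀ i j : Fin n, i < j →
      (f (α i) < f (α j) ∨ (f (α i) = f (α j) ∧ α i < α j)) :=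
    (sort_eq_iff f α).1 rfl
  have Hg : ∀ i j : Fin n, i < j →
      (g (β i) < g (β j) ∨ (g (β i) = g (β j) ∧ β i < β j)) :=
    (sort_eq_iff g β).1 rfl
  rw [sort_eq_iff]
  intro i j hij
  have hσi : (β * α) i = β (α i) := rfl
  have hσj : (β * α) j = β (α j) := rfl
  have hvi : (h ((β * α) i) : ℕ) = (f (α i) : ℕ) * q + (g (β (α i)) : ℕ) := by
    simp [hh, hσi, Equiv.Perm.coe_inv, Equiv.symm_apply_apply]
  have hvj : (h ((β * α) j) : ℕ) = (f (α j) : ℕ) * q + (g (β (α j)) : ℕ) := by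
    simp [hh, hσj, Equiv.Perm.coe_inv, Equiv.symm_apply_apply]
  rcases Hf i j hij with hf1 | ⟨hf2, hf3⟩
  · left
    rw [Fin.lt_def, hvi, hvj]
    exact (base_lt (g (β (α i))).isLt (g (β (α j))).isLt).2 (Or.inl hf1)
  · rcases Hg (α i) (α j) hf3 with hg1 | ⟨hg2, hg3⟩
    · left
      rw [Fin.lt_def, hvi, hvj]
      apply (base_lt (g (β (α i))).isLt (g (β (α j))).isLt).2
      exact Or.inr ⟨by rw [hf2], hg1⟩
    · right
      constructor
      · apply Fin.ext
        rw [hvi, hvj, hf2, hg2]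
      · exact hg3

lemma Phi_mul (p q : ℕ) (hp : 1 ≤ p) (hq : 1 ≤ q) :
    Phi n q * Phi n p = Phi n (q * p) := by
  classical
  rw [Phi, Phi, Phi, Finset.sum_mul_sum]
  simp only [MonoidAlgebra.single_mul_single, one_mul]
  rw [← Finset.sum_product']
  apply Finset.sum_nbij' (i := fun gf : (Fin n → Fin q) × (Fin n → Fin p) =>
      (fun x => (⟨(gf.2 ((Tuple.sort gf.1)⁻¹ x) : ℕ) * q + (gf.1 x : ℕ),
        comb_lt (gf.2 ((Tuple.sort gf.1)⁻¹ x)).isLt (gf.1 x).isLt⟩ : Fin (q * p))))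
    (j := fun h : Fin n → Fin (q * p) =>
      ((fun x => (⟨(h x : ℕ) % q, Nat.mod_lt _ (by omega)⟩ : Fin q)),
       (fun y => (⟨(h (Tuple.sort (fun x => (⟨(h x : ℕ) % q,
            Nat.mod_lt _ (by omega)⟩ : Fin q)) y) : ℕ) / q,
          Nat.div_lt_of_lt_mul (by
            have := (h (Tuple.sort (fun x => (⟨(h x : ℕ) % q,
              Nat.mod_lt _ (by omega)⟩ : Fin q)) y)).isLt
            omega)⟩ : Fin p))))
  · intro gf _
    exact Finset.mem_univ _
  · intro h _
    exact Finset.mem_univ _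
  · -- left inverse
    intro gf _
    obtain ⟨g, f⟩ := gf
    have hgeq : (fun x => (⟨(((fun x => (⟨(f ((Tuple.sort g)⁻¹ x) : ℕ) * q + (g x : ℕ),
        comb_lt (f ((Tuple.sort g)⁻¹ x)).isLt (g x).isLt⟩ : Fin (q * p))) x : Fin (q*p)) : ℕ) % q,
        Nat.mod_lt _ (by omega)⟩ : Fin q)) = g := by
      funext x
      apply Fin.ext
      simp only [Fin.val_mk]
      rw [Nat.mul_add_mod']
      exact Nat.mod_eq_of_lt (g x).isLt
    ext1
    · exact hgeq
    · simp only
      funext y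
      apply Fin.ext
      simp only [Fin.val_mk]
      rw [hgeq]
      simp only [Equiv.Perm.coe_inv, Equiv.symm_apply_apply]
      rw [Nat.add_comm, Nat.add_mul_div_right _ _ (by omega : 0 < q)]
      have : (g (Tuple.sort g y) : ℕ) / q = 0 := Nat.div_eq_of_lt (g _).isLt
      omega
  · -- right inverse
    intro h _
    funext x
    apply Fin.ext
    simp only [Fin.val_mk]
    rw [Equiv.Perm.coe_inv, Equiv.apply_symm_apply]
    exact Nat.div_add_mod' _ q
  · intro gf _
    obtain ⟨g, f⟩ := gf
    rw [sort_comb]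
lemma eval_step (hn : 1 ≤ n) {d : ℕ} (hd : d ≤ n - 1) (p : ℕ) :
    ∑ i ∈ Finset.range (n+1), eulerCoeff n d i * (p:ℚ)^i
      = ((p + n - 1 - d).choose n : ℚ) := by
  have hfact : ((Nat.factorial n : ℚ)) ≠ 0 := by
    exact_mod_cast Nat.factorial_ne_zero n
  set P : Polynomial ℚ := (((Nat.factorial n : ℚ))⁻¹ • ∏ j ∈ Finset.range n,
    (Polynomial.X + Polynomial.C ((n : ℚ) - 1 - (d : ℚ) - (j : ℚ)))) with hP
  have hdeg : P.natDegree < n + 1 := by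
    apply Nat.lt_succ_of_le
    refine le_trans (Polynomial.natDegree_smul_le _ _) ?_
    refine le_trans (Polynomial.natDegree_prod_le _ _) ?_
    have : ∀ j ∈ Finset.range n,
        (Polynomial.X + Polynomial.C ((n : ℚ) - 1 - (d : ℚ) - (j : ℚ))).natDegree = 1 := by
      intro j _
      exact Polynomial.natDegree_X_add_C _
    rw [Finset.sum_congr rfl this]
    simp
  have hsum : ∑ i ∈ Finset.range (n+1), eulerCoeff n d i * (p:ℚ)^i = P.eval (p:ℚ) := by
    rw [Polynomial.eval_eq_sum_range' hdeg]
    rfl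
  rw [hsum]
  set M : ℕ := p + n - 1 - d with hMdef
  have hM : ((M : ℕ) : ℚ) = (p:ℚ) + (n:ℚ) - 1 - (d:ℚ) := by
    have h1 : M = p + (n - 1 - d) := by omega
    have h2 : ((n - 1 - d : ℕ) : ℚ) = (n:ℚ) - 1 - (d:ℚ) := by
      rw [Nat.sub_sub, Nat.cast_sub (by omega : 1 + d ≤ n)]
      push_cast
      ring
    rw [h1]
    push_cast [h2]
    ring
  have heval : P.eval (p:ℚ) = ((Nat.factorial n : ℚ))⁻¹ *
      ∏ j ∈ Finset.range n, ((M : ℚ) - (j : ℚ)) := by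
    rw [hP, Polynomial.eval_smul, smul_eq_mul]
    congr 1
    rw [Polynomial.eval_prod]
    apply Finset.prod_congr rfl
    intro j _
    rw [Polynomial.eval_add, Polynomial.eval_X, Polynomial.eval_C, hM]
    ring
  rw [heval]
  have hprod : ∏ j ∈ Finset.range n, ((M : ℚ) - (j : ℚ)) = (M.descFactorial n : ℚ) := by
    by_cases hcase : n ≤ M
    · rw [Nat.descFactorial_eq_prod_range, Nat.cast_prod]
      apply Finset.prod_congr rfl
      intro j hj
      rw [Finset.mem_range] at hj
      rw [Nat.cast_sub (by omega : j ≤ M)]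
    · rw [Nat.descFactorial_eq_zero_iff_lt.2 (by omega), Nat.cast_zero]
      apply Finset.prod_eq_zero (Finset.mem_range.2 (by omega : M < n))
      simp
  rw [hprod, Nat.descFactorial_eq_factorial_mul_choose, Nat.cast_mul,
    inv_mul_cancel_left₀ hfact]

lemma Phi_eq (hn : 1 ≤ n) (p : ℕ) (hp : 1 ≤ p) :
    Phi n p = ∑ σ : Equiv.Perm (Fin n),
      MonoidAlgebra.single σ (((p + n - 1 - des σ).choose n : ℚ)) := by
  classical
  rw [Phi]
  have h1 : ∑ f : Fin n → Fin p, MonoidAlgebra.single (Tuple.sort f) (1:ℚ)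
      = ∑ σ : Equiv.Perm (Fin n), ∑ f ∈ Finset.univ.filter
          (fun f : Fin n → Fin p => Tuple.sort f = σ),
          MonoidAlgebra.single (Tuple.sort f) (1:ℚ) := by
    rw [Finset.sum_fiberwise_eq_sum_filter]
    congr 1
    rw [Finset.filter_true_of_mem]
    intro f _
    exact Finset.mem_univ _
  rw [h1]
  apply Finset.sum_congr rfl
  intro σ _
  rw [Finset.sum_congr rfl (fun f hf => by rw [(Finset.mem_filter.1 hf).2]),
    Finset.sum_const, card_fiber hn hp σ, ← Nat.cast_smul_eq_nsmul ℚ, MonoidAlgebra.smul_single,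
    smul_eq_mul, mul_one]

lemma sum_euler_eq (hn : 1 ≤ n) (p : ℕ) :
    ∑ i ∈ Finset.range (n+1), (p:ℚ)^i • euler n i
      = ∑ σ : Equiv.Perm (Fin n),
          MonoidAlgebra.single σ (((p + n - 1 - des σ).choose n : ℚ)) := by
  unfold euler
  have h1 : ∀ i ∈ Finset.range (n+1), (p:ℚ)^i •
      (∑ σ : Equiv.Perm (Fin n), MonoidAlgebra.single σ (eulerCoeff n (des σ) i))
      = ∑ σ : Equiv.Perm (Fin n),
          MonoidAlgebra.single σ (eulerCoeff n (des σ) i * (p:ℚ)^i) := by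
    intro i _
    rw [Finset.smul_sum]
    apply Finset.sum_congr rfl
    intro σ _
    rw [MonoidAlgebra.smul_single]
    congr 1
    rw [smul_eq_mul, mul_comm]
  rw [Finset.sum_congr rfl h1, Finset.sum_comm]
  apply Finset.sum_congr rfl
  intro σ _
  rw [← eval_step hn (des_le σ) p]
  exact (map_sum (MonoidAlgebra.singleAddHom σ) _ _).symm
lemma Phi_eq_euler (hn : 1 ≤ n) (p : ℕ) (hp : 1 ≤ p) :
    Phi n p = ∑ i ∈ Finset.range (n+1), (p:ℚ)^i • euler n i := by
  rw [Phi_eq hn p hp, ← sum_euler_eq hn p]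

lemma eval_extract {N : ℕ} (c e : ℕ → ℚ)
    (H : ∀ p : ℕ, 1 ≤ p → ∑ i ∈ Finset.range N, c i * (p:ℚ)^i
      = ∑ i ∈ Finset.range N, e i * (p:ℚ)^i) :
    ∀ i ∈ Finset.range N, c i = e i := by
  set F : Polynomial ℚ := ∑ i ∈ Finset.range N, Polynomial.C (c i) * Polynomial.X ^ i with hF
  set G : Polynomial ℚ := ∑ i ∈ Finset.range N, Polynomial.C (e i) * Polynomial.X ^ i with hG
  have hFeval : ∀ x : ℚ, F.eval x = ∑ i ∈ Finset.range N, c i * x^i := by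
    intro x
    rw [hF, Polynomial.eval_finset_sum]
    simp
  have hGeval : ∀ x : ℚ, G.eval x = ∑ i ∈ Finset.range N, e i * x^i := by
    intro x
    rw [hG, Polynomial.eval_finset_sum]
    simp
  have hFG : F = G := by
    apply Polynomial.eq_of_infinite_eval_eq
    apply Set.Infinite.mono (s := Set.range (fun p : ℕ => ((p+1 : ℕ) : ℚ)))
    · rintro x ⟨p, rfl⟩
      simp only [Set.mem_setOf_eq, hFeval, hGeval]
      exact H (p+1) (by omega)
    · apply Set.infinite_range_of_injective
      intro a b hab
      have : ((a+1 : ℕ) : ℚ) = ((b+1 : ℕ) : ℚ) := hab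
      exact_mod_cast Nat.succ_injective (by exact_mod_cast this)
  intro i hi
  have h1 : F.coeff i = c i := by
    rw [hF, Polynomial.finset_sum_coeff]
    simp only [Polynomial.coeff_C_mul, Polynomial.coeff_X_pow, mul_ite, mul_one, mul_zero]
    rw [Finset.sum_ite_eq (Finset.range N) i c, if_pos hi]
  have h2 : G.coeff i = e i := by
    rw [hG, Polynomial.finset_sum_coeff]
    simp only [Polynomial.coeff_C_mul, Polynomial.coeff_X_pow, mul_ite, mul_one, mul_zero]
    rw [Finset.sum_ite_eq (Finset.range N) i e, if_pos hi]
  rw [← h1, ← h2, hFG]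

lemma master (hn : 1 ≤ n) (τ : Equiv.Perm (Fin n)) :
    ∀ i ∈ Finset.range (n+1), ∀ j ∈ Finset.range (n+1),
      (euler n i * euler n j).coeff τ = if i = j then (euler n i).coeff τ else 0 := by
  have key : ∀ p q : ℕ, 1 ≤ p → 1 ≤ q →
      ∑ j ∈ Finset.range (n+1), (∑ i ∈ Finset.range (n+1),
        ((euler n i * euler n j).coeff τ) * (q:ℚ)^i) * (p:ℚ)^j
      = ∑ j ∈ Finset.range (n+1), (((euler n j).coeff τ) * (q:ℚ)^j) * (p:ℚ)^j := by
    intro p q hp hq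
    have hmul := Phi_mul (n := n) p q hp hq
    rw [Phi_eq_euler hn p hp, Phi_eq_euler hn q hq,
      Phi_eq_euler hn (q*p) (by exact Nat.one_le_iff_ne_zero.2 (by positivity))] at hmul
    rw [Finset.sum_mul_sum] at hmul
    have hL : ∑ i ∈ Finset.range (n+1), ∑ j ∈ Finset.range (n+1),
        (((q:ℚ)^i • euler n i) * ((p:ℚ)^j • euler n j)).coeff τ
        = ∑ j ∈ Finset.range (n+1), (∑ i ∈ Finset.range (n+1),
            ((euler n i * euler n j).coeff τ) * (q:ℚ)^i) * (p:ℚ)^j := by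
      rw [Finset.sum_comm]
      apply Finset.sum_congr rfl
      intro j _
      rw [Finset.sum_mul]
      apply Finset.sum_congr rfl
      intro i _
      rw [smul_mul_assoc, mul_smul_comm, MonoidAlgebra.coeff_smul_apply, MonoidAlgebra.coeff_smul_apply,
        smul_eq_mul, smul_eq_mul]
      ring
    have hR : ∑ k ∈ Finset.range (n+1), (((q*p : ℕ):ℚ))^k * (euler n k).coeff τ
        = ∑ k ∈ Finset.range (n+1), (((euler n k).coeff τ) * (q:ℚ)^k) * (p:ℚ)^k := by
      apply Finset.sum_congr rfl
      intro k _
      push_cast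
      ring
    have hL2 : (∑ i ∈ Finset.range (n+1), ∑ j ∈ Finset.range (n+1),
        ((q:ℚ)^i • euler n i) * ((p:ℚ)^j • euler n j)).coeff τ
        = ∑ i ∈ Finset.range (n+1), ∑ j ∈ Finset.range (n+1),
            (((q:ℚ)^i • euler n i) * ((p:ℚ)^j • euler n j)).coeff τ := by
      rw [MonoidAlgebra.coeff_sum, Finset.sum_apply']
      exact Finset.sum_congr rfl fun i _ => by rw [MonoidAlgebra.coeff_sum, Finset.sum_apply']
    have hR2 : (∑ i ∈ Finset.range (n+1), (((q*p : ℕ):ℚ))^i • euler n i).coeff τ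
        = ∑ k ∈ Finset.range (n+1), (((q*p : ℕ):ℚ))^k * (euler n k).coeff τ := by
      rw [MonoidAlgebra.coeff_sum, Finset.sum_apply']
      exact Finset.sum_congr rfl fun k _ => by rw [MonoidAlgebra.coeff_smul_apply, smul_eq_mul]
    rw [← hL, ← hR, ← hL2, ← hR2]
    exact congrArg (fun v => v.coeff τ) hmul
  -- first extraction (in p), for each fixed q
  have step1 : ∀ q : ℕ, 1 ≤ q → ∀ j ∈ Finset.range (n+1),
      ∑ i ∈ Finset.range (n+1), ((euler n i * euler n j).coeff τ) * (q:ℚ)^i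
        = ((euler n j).coeff τ) * (q:ℚ)^j := by
    intro q hq
    exact eval_extract _ _ (fun p hp => key p q hp hq)
  -- second extraction (in q), for each fixed j
  intro i hi j hj
  have step2 : ∀ i ∈ Finset.range (n+1), (euler n i * euler n j).coeff τ
      = (if i = j then (euler n j).coeff τ else 0) := by
    apply eval_extract (fun i => (euler n i * euler n j).coeff τ)
      (fun i => if i = j then (euler n j).coeff τ else 0)
    intro q hq
    rw [step1 q hq j hj]
    rw [Finset.sum_congr rfl (fun i _ => by
      rw [ite_mul, zero_mul] : ∀ i ∈ Finset.range (n+1),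
        (if i = j then (euler n j).coeff τ else 0) * (q:ℚ)^i
          = if i = j then ((euler n j).coeff τ) * (q:ℚ)^i else 0)]
    rw [Finset.sum_ite_eq' (Finset.range (n+1)) j (fun i => ((euler n j).coeff τ) * (q:ℚ)^i)]
    rw [if_pos hj]
  have := step2 i hi
  rcases eq_or_ne i j with rfl | hij
  · simpa using this
  · rw [if_neg hij] at this ⊢
    exact this

lemma eulerCoeff_zero (hn : 1 ≤ n) {d : ℕ} (hd : d ≤ n - 1) : eulerCoeff n d 0 = 0 := by
  rw [eulerCoeff, Polynomial.coeff_zero_eq_eval_zero, Polynomial.eval_smul,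
    Polynomial.eval_prod]
  have : ∏ j ∈ Finset.range n, (Polynomial.X
      + Polynomial.C ((n : ℚ) - 1 - (d : ℚ) - (j : ℚ))).eval 0 = 0 := by
    apply Finset.prod_eq_zero (Finset.mem_range.2 (by omega : n - 1 - d < n))
    rw [Polynomial.eval_add, Polynomial.eval_X, Polynomial.eval_C]
    have : ((n - 1 - d : ℕ) : ℚ) = (n:ℚ) - 1 - (d:ℚ) := by
      rw [Nat.sub_sub, Nat.cast_sub (by omega : 1 + d ≤ n)]
      push_cast
      ring
    rw [this]
    ring
  rw [this, smul_zero]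

lemma euler_zero (hn : 1 ≤ n) : euler n 0 = 0 := by
  rw [euler]
  apply Finset.sum_eq_zero
  intro σ _
  rw [eulerCoeff_zero hn (des_le σ)]
  exact MonoidAlgebra.single_zero σ

lemma sum_range_euler (hn : 1 ≤ n) :
    ∑ i ∈ Finset.range (n+1), euler n i = 1 := by
  have h1 := Phi_eq_euler (n := n) hn 1 (le_refl 1)
  simp only [Nat.cast_one, one_pow, one_smul] at h1
  rw [← h1, Phi]
  have : ∀ f : Fin n → Fin 1, Tuple.sort f = 1 := by
    intro f
    have hmono : Monotone f := fun a b _ => le_of_eq (Subsingleton.elim _ _)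
    exact Tuple.sort_eq_refl_iff_monotone.2 hmono
  rw [Finset.sum_congr rfl (fun f _ => by rw [this f])]
  rw [Finset.sum_const, Finset.card_univ]
  have hcard : Fintype.card (Fin n → Fin 1) = 1 := by
    simp
  rw [hcard, one_nsmul]
  rfl
end EulerianAux


/-- The Eulerian idempotents `e_n^{(i)}` (for `1 ≤ i ≤ n`), which act on the degree-`n`
part of the Hochschild complex of a commutative algebra over a `ℚ`-algebra, are orthogonal
idempotents in `ℚ[S_n]` summing to the identity. -/
theorem eulerian_idempotents (R A : Type) [CommRing R] [CommRing A] [Algebra R A]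
    [Algebra ℚ R] (n : ℕ) (hn : 1 ≤ n) :
    (∀ i ∈ Finset.Icc 1 n, ∀ j ∈ Finset.Icc 1 n,
      euler n i * euler n j = if i = j then euler n i else 0) ∧
    (∑ i ∈ Finset.Icc 1 n, euler n i = 1) := by
  constructor
  · intro i hi j hj
    rw [Finset.mem_Icc] at hi hj
    have hi' : i ∈ Finset.range (n+1) := Finset.mem_range.2 (by omega)
    have hj' : j ∈ Finset.range (n+1) := Finset.mem_range.2 (by omega)
    apply MonoidAlgebra.ext; apply Finsupp.ext
    intro τ
    rw [EulerianAux.master hn τ i hi' j hj']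
    by_cases h : i = j
    · rw [if_pos h, if_pos h]
    · rw [if_neg h, if_neg h]
      rfl
  · have hsplit : Finset.range (n+1) = insert 0 (Finset.Icc 1 n) := by
      ext x
      simp only [Finset.mem_range, Finset.mem_insert, Finset.mem_Icc]
      omega
    have h := EulerianAux.sum_range_euler (n := n) hn
    rw [hsplit, Finset.sum_insert (by simp), EulerianAux.euler_zero hn, zero_add] at h
    exact h
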